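/- arXiv:1304.7014 — 3 statements merged into one kernel-verified Lean document; each statement's English description precedes it below -/
import Mathlib

section
/- For measures μ, ν on ℝ^d with finite mass and finite p-th moment, the infimum defining T_p^{a,b}(μ,ν) = inf over μ̃, ν̃ with |μ̃|=|ν̃| of a^p(|μ−μ̃|+|ν−ν̃|)^p + b^p W_p^p(μ̃,ν̃) is unchanged if one adds the constraints μ̃ ≤ μ and ν̃ ≤ ν. -/
open MeasureTheory Set
open scoped ENNReal NNReal

noncomputable section

abbrev Rd (d : ℕ) := EuclideanSpace ℝ (Fin d)

/-- Transference plans: probability measures on the product with normalized marginals. -/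
def IsPlan {d : ℕ} (μ ν : Measure (Rd d)) (π : Measure (Rd d × Rd d)) : Prop :=
  IsProbabilityMeasure π ∧ π.map Prod.fst = (μ Set.univ)⁻¹ • μ ∧
    π.map Prod.snd = (ν Set.univ)⁻¹ • ν

/-- Cost of a plan. -/
def planCost {d : ℕ} (p : ℝ) (π : Measure (Rd d × Rd d)) : ℝ≥0∞ :=
  ∫⁻ q, (edist q.1 q.2) ^ p ∂π

/-- Mass-scaled Wasserstein distance `W_p(μ,ν) = |μ| (inf_π ∫ |x-y|^p dπ)^{1/p}`. -/
def Wp {d : ℕ} (p : ℝ) (μ ν : Measure (Rd d)) : ℝ≥0∞ :=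
  μ Set.univ * (⨅ π : {π : Measure (Rd d × Rd d) // IsPlan μ ν π}, planCost p π.1) ^ (1/p)

/-- Total variation norm `|μ - ν|` of the difference of two measures. -/
def tv {d : ℕ} (μ ν : Measure (Rd d)) : ℝ≥0∞ := (μ - ν) Set.univ + (ν - μ) Set.univ

/-- Finite mass and finite `p`-th moment. -/
def finMom {d : ℕ} (p : ℝ) (μ : Measure (Rd d)) : Prop :=
  IsFiniteMeasure μ ∧ ∫⁻ x, (‖x‖₊ : ℝ≥0∞) ^ p ∂μ ≠ ⊤

/-- The functional `T_p^{a,b}`. -/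
def Tab {d : ℕ} (a b p : ℝ) (μ ν : Measure (Rd d)) : ℝ≥0∞ :=
  ⨅ (μ' : Measure (Rd d)) (ν' : Measure (Rd d)) (_ : IsFiniteMeasure μ')
    (_ : IsFiniteMeasure ν') (_ : μ' Set.univ = ν' Set.univ),
    ENNReal.ofReal a ^ p * (tv μ μ' + tv ν ν') ^ p + ENNReal.ofReal b ^ p * Wp p μ' ν' ^ p

/-- The generalized Wasserstein distance `W_p^{a,b}`. -/
def Wab {d : ℕ} (a b p : ℝ) (μ ν : Measure (Rd d)) : ℝ≥0∞ := Tab a b p μ ν ^ (1/p)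

/-! Given competitors `μ'`, `ν'` and a coupling `σ` of them, shrink the first marginal of `σ` to
`μ ⊓ μ'`, written `μ - (μ - μ')`, by disintegration, then the second marginal of the result to
`ν ⊓ ν₁`. The new marginals lie below `μ` and `ν`; the coupling only got smaller, so its transport
cost did not grow; and in each step the mass removed from one marginal lowers one total variation
term by exactly as much as it can raise the other. -/

open ProbabilityTheory

theorem ENNReal.rpow_sub_one_mul {p : ℝ} (hp : 1 ≤ p) (x : ℝ≥0∞) : x ^ (p - 1) * x = x ^ p := by
  conv_rhs => rw [← sub_add_cancel p 1]
  rw [ENNReal.rpow_add_of_nonneg _ _ (sub_nonneg.2 hp) zero_le_one, ENNReal.rpow_one]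

namespace MeasureTheory.Measure

variable {α β : Type*} [MeasurableSpace α] [MeasurableSpace β]

section Sub

variable {μ ν ξ : Measure α} [IsFiniteMeasure μ] [IsFiniteMeasure ν]

theorem add_sub_eq_add_sub : μ + (ν - μ) = ν + (μ - ν) := by
  have h := sub_toSignedMeasure_eq_toSignedMeasure_sub (μ := μ) (ν := ν)
  rw [sub_eq_sub_iff_add_eq_add] at h
  rw [← toSignedMeasure_eq_toSignedMeasure_iff, toSignedMeasure_add, toSignedMeasure_add, h,
    add_comm]

theorem le_sub_add : μ ≤ μ - ν + ν := by
  rw [add_comm, ← add_sub_eq_add_sub]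
  exact Measure.le_add_right le_rfl

theorem sub_apply_univ_add : (μ - ν) univ + ν univ = (ν - μ) univ + μ univ := by
  rw [add_comm, ← add_apply, add_sub_eq_add_sub, add_apply, add_comm]

theorem sub_le_sub_add_sub [IsFiniteMeasure ξ] : μ - ν ≤ μ - ξ + (ξ - ν) :=
  sub_le_of_le_add <| calc
    μ ≤ μ - ξ + ξ := le_sub_add
    _ ≤ μ - ξ + (ξ - ν + ν) := by gcongr; exact le_sub_add
    _ = μ - ξ + (ξ - ν) + ν := (add_assoc _ _ _).symm

theorem sub_sub_le : μ - (μ - ν) ≤ ν :=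
  sub_le_of_le_add <| le_sub_add.trans_eq (add_comm _ _)

theorem sub_sub_self_apply_univ_add : (μ - (μ - ν)) univ + (ν - μ) univ = ν univ := by
  have hμ : (μ - (μ - ν)) univ + (μ - ν) univ = μ univ := by
    rw [← add_apply, sub_add_cancel_of_le sub_le]
  refine (ENNReal.add_right_inj (measure_ne_top (μ - ν) univ)).1 ?_
  rw [add_comm ((μ - ν) univ), sub_apply_univ_add, ← hμ]
  ring

end Sub

theorem compProd_mono_left {ρ ρ' : Measure α} [SFinite ρ] [SFinite ρ'] (κ : Kernel α β)
    [IsSFiniteKernel κ] (h : ρ ≤ ρ') : ρ ⊗ₘ κ ≤ ρ' ⊗ₘ κ := by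
  refine Measure.le_iff.2 fun s hs ↦ ?_
  rw [compProd_apply hs, compProd_apply hs]
  exact lintegral_mono' h le_rfl

theorem exists_le_fst_eq [StandardBorelSpace β] [Nonempty β] (σ : Measure (α × β))
    [IsFiniteMeasure σ] {ρ : Measure α} (h : ρ ≤ σ.fst) : ∃ σ' ≤ σ, σ'.fst = ρ := by
  have : IsFiniteMeasure ρ := isFiniteMeasure_of_le _ h
  refine ⟨ρ ⊗ₘ σ.condKernel, ?_, fst_compProd _ _⟩
  calc ρ ⊗ₘ σ.condKernel ≤ σ.fst ⊗ₘ σ.condKernel := compProd_mono_left _ h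
    _ = σ := disintegrate σ _

theorem exists_le_snd_eq [StandardBorelSpace α] [Nonempty α] (σ : Measure (α × β))
    [IsFiniteMeasure σ] {ρ : Measure β} (h : ρ ≤ σ.snd) : ∃ σ' ≤ σ, σ'.snd = ρ := by
  obtain ⟨τ, hτ, hτρ⟩ := exists_le_fst_eq (σ.map Prod.swap) (ρ := ρ) (by rwa [fst_map_swap])
  refine ⟨τ.map Prod.swap, ?_, by rw [snd_map_swap, hτρ]⟩
  simpa [map_map measurable_swap measurable_swap] using map_mono hτ measurable_swap

end MeasureTheory.Measure

section Transport

variable {d : ℕ}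

theorem tv_triangle (μ ξ ν : Measure (Rd d)) [IsFiniteMeasure μ] [IsFiniteMeasure ξ]
    [IsFiniteMeasure ν] : tv μ ν ≤ tv μ ξ + tv ξ ν := by
  have h₁ := Measure.le_iff'.1 (Measure.sub_le_sub_add_sub (μ := μ) (ν := ν) (ξ := ξ)) univ
  have h₂ := Measure.le_iff'.1 (Measure.sub_le_sub_add_sub (μ := ν) (ν := μ) (ξ := ξ)) univ
  rw [Measure.add_apply] at h₁ h₂
  calc tv μ ν ≤ (μ - ξ) univ + (ξ - ν) univ + ((ν - ξ) univ + (ξ - μ) univ) := add_le_add h₁ h₂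
    _ = tv μ ξ + tv ξ ν := by rw [tv, tv]; ring

theorem tv_add_measure_univ_of_le {μ ν : Measure (Rd d)} [IsFiniteMeasure ν] (h : ν ≤ μ) :
    tv μ ν + ν univ = μ univ := by
  rw [tv, Measure.sub_eq_zero_of_le h, Measure.coe_zero, Pi.zero_apply, add_zero,
    ← Measure.add_apply, Measure.sub_add_cancel_of_le h]

theorem tv_add_tv_sub_sub_le {μ μ' ν ν' ν₁ : Measure (Rd d)} [IsFiniteMeasure μ]
    [IsFiniteMeasure μ'] [IsFiniteMeasure ν] [IsFiniteMeasure ν'] [IsFiniteMeasure ν₁]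
    (hν₁ : ν₁ ≤ ν') (h₁ : (μ - (μ - μ')) univ = ν₁ univ) (h' : μ' univ = ν' univ) :
    tv μ (μ - (μ - μ')) + tv ν ν₁ ≤ tv μ μ' + tv ν ν' := by
  have hμ : tv μ (μ - (μ - μ')) = (μ - μ') univ := by
    refine (ENNReal.add_left_inj (measure_ne_top (μ - (μ - μ')) univ)).1 ?_
    rw [tv_add_measure_univ_of_le Measure.sub_le, add_comm, ← Measure.add_apply,
      Measure.sub_add_cancel_of_le Measure.sub_le]
  have hν : tv ν' ν₁ = (μ' - μ) univ := by
    refine (ENNReal.add_left_inj (measure_ne_top ν₁ univ)).1 ?_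
    rw [tv_add_measure_univ_of_le hν₁, ← h', ← h₁, add_comm,
      Measure.sub_sub_self_apply_univ_add]
  calc tv μ (μ - (μ - μ')) + tv ν ν₁ ≤ (μ - μ') univ + (tv ν ν' + tv ν' ν₁) := by
        rw [hμ]; gcongr; exact tv_triangle ν ν' ν₁
    _ = tv μ μ' + tv ν ν' := by rw [hν, tv, tv]; ring

theorem exists_le_tv_le (μ ν : Measure (Rd d)) [IsFiniteMeasure μ] [IsFiniteMeasure ν]
    (σ : Measure (Rd d × Rd d)) [IsFiniteMeasure σ] :
    ∃ σ' ≤ σ, σ'.fst ≤ μ ∧ σ'.snd ≤ ν ∧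
      tv μ σ'.fst + tv ν σ'.snd ≤ tv μ σ.fst + tv ν σ.snd := by
  obtain ⟨σ₁, hσ₁, hσ₁fst⟩ := Measure.exists_le_fst_eq σ (Measure.sub_sub_le (μ := μ))
  have : IsFiniteMeasure σ₁ := isFiniteMeasure_of_le σ hσ₁
  have step₁ : tv μ σ₁.fst + tv ν σ₁.snd ≤ tv μ σ.fst + tv ν σ.snd := by
    rw [hσ₁fst]
    refine tv_add_tv_sub_sub_le (Measure.snd_mono hσ₁) ?_ ?_
    · rw [← hσ₁fst, Measure.fst_univ, Measure.snd_univ]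
    · rw [Measure.fst_univ, Measure.snd_univ]
  obtain ⟨σ₂, hσ₂, hσ₂snd⟩ := Measure.exists_le_snd_eq σ₁ (Measure.sub_sub_le (μ := ν))
  have : IsFiniteMeasure σ₂ := isFiniteMeasure_of_le σ₁ hσ₂
  have step₂ : tv μ σ₂.fst + tv ν σ₂.snd ≤ tv μ σ₁.fst + tv ν σ₁.snd := by
    rw [add_comm (tv μ _), add_comm (tv μ _), hσ₂snd]
    refine tv_add_tv_sub_sub_le (Measure.fst_mono hσ₂) ?_ ?_
    · rw [← hσ₂snd, Measure.fst_univ, Measure.snd_univ]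
    · rw [Measure.fst_univ, Measure.snd_univ]
  refine ⟨σ₂, hσ₂.trans hσ₁, ?_, hσ₂snd ▸ Measure.sub_le, ?_⟩
  · exact (Measure.fst_mono hσ₂).trans (hσ₁fst ▸ Measure.sub_le)
  · exact step₂.trans step₁

theorem Wp_rpow_eq {p : ℝ} (hp : 0 < p) (μ ν : Measure (Rd d)) :
    Wp p μ ν ^ p = μ univ ^ p * ⨅ π : {π // IsPlan μ ν π}, planCost p π.1 := by
  rw [Wp, ENNReal.mul_rpow_of_nonneg _ _ hp.le, ← ENNReal.rpow_mul, one_div_mul_cancel hp.ne',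
    ENNReal.rpow_one]

theorem isPlan_inv_smul (σ : Measure (Rd d × Rd d)) [IsFiniteMeasure σ] (hσ : σ univ ≠ 0) :
    IsPlan σ.fst σ.snd ((σ univ)⁻¹ • σ) := by
  refine ⟨⟨?_⟩, ?_, ?_⟩
  · rw [Measure.smul_apply, smul_eq_mul, ENNReal.inv_mul_cancel hσ (measure_ne_top σ univ)]
  · rw [Measure.map_smul, Measure.fst_univ]; rfl
  · rw [Measure.map_smul, Measure.snd_univ]; rfl

theorem IsPlan.fst_smul {μ ν : Measure (Rd d)} {π : Measure (Rd d × Rd d)} [IsFiniteMeasure μ]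
    (hπ : IsPlan μ ν π) (hμ : μ univ ≠ 0) : (μ univ • π).fst = μ := by
  rw [Measure.fst, Measure.map_smul, hπ.2.1, smul_smul,
    ENNReal.mul_inv_cancel hμ (measure_ne_top μ univ), one_smul]

theorem IsPlan.snd_smul {μ ν : Measure (Rd d)} {π : Measure (Rd d × Rd d)} [IsFiniteMeasure ν]
    (hπ : IsPlan μ ν π) (hν : ν univ ≠ 0) : (ν univ • π).snd = ν := by
  rw [Measure.snd, Measure.map_smul, hπ.2.2, smul_smul,
    ENNReal.mul_inv_cancel hν (measure_ne_top ν univ), one_smul]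

theorem isPlan_prod (μ ν : Measure (Rd d)) [IsFiniteMeasure μ] [IsFiniteMeasure ν] [NeZero μ]
    [NeZero ν] : IsPlan μ ν (((μ univ)⁻¹ • μ).prod ((ν univ)⁻¹ • ν)) :=
  ⟨inferInstance, Measure.fst_prod, Measure.snd_prod⟩

theorem Wp_rpow_le {p : ℝ} (hp : 1 ≤ p) (σ : Measure (Rd d × Rd d)) [IsFiniteMeasure σ] :
    Wp p σ.fst σ.snd ^ p ≤ σ univ ^ (p - 1) * ∫⁻ q, edist q.1 q.2 ^ p ∂σ := by
  have hp₀ : 0 < p := zero_lt_one.trans_le hp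
  rw [Wp_rpow_eq hp₀, Measure.fst_univ]
  set m := σ univ
  by_cases hm : m = 0
  · rw [hm, ENNReal.zero_rpow_of_pos hp₀, zero_mul]
    exact zero_le
  calc m ^ p * ⨅ π : {π // IsPlan σ.fst σ.snd π}, planCost p π.1
      ≤ m ^ p * planCost p (m⁻¹ • σ) := by
        gcongr; exact iInf_le_of_le ⟨_, isPlan_inv_smul σ hm⟩ le_rfl
    _ = m ^ (p - 1) * ∫⁻ q, edist q.1 q.2 ^ p ∂σ := by
        rw [planCost, lintegral_smul_measure, smul_eq_mul, ← ENNReal.rpow_sub_one_mul hp,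
          mul_assoc, ← mul_assoc m, ENNReal.mul_inv_cancel hm (measure_ne_top σ univ), one_mul]

end Transport

section Tab

variable {d : ℕ} (a b p : ℝ) (μ ν : Measure (Rd d))

def tabCost (μ' ν' : Measure (Rd d)) : ℝ≥0∞ :=
  ENNReal.ofReal a ^ p * (tv μ μ' + tv ν ν') ^ p + ENNReal.ofReal b ^ p * Wp p μ' ν' ^ p

def TabLe : ℝ≥0∞ :=
  ⨅ (μ' : Measure (Rd d)) (ν' : Measure (Rd d)) (_ : IsFiniteMeasure μ')
    (_ : IsFiniteMeasure ν') (_ : μ' ≤ μ) (_ : ν' ≤ ν) (_ : μ' univ = ν' univ),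
    tabCost a b p μ ν μ' ν'

theorem Tab_le_TabLe : Tab a b p μ ν ≤ TabLe a b p μ ν :=
  le_iInf₂ fun μ' ν' ↦ le_iInf₂ fun _ _ ↦ le_iInf₂ fun _ _ ↦ le_iInf fun h ↦
    iInf₂_le_of_le μ' ν' <| iInf₂_le_of_le ‹_› ‹_› <| iInf_le _ h

theorem TabLe_le_tabCost_of_le {μ' ν' : Measure (Rd d)} [IsFiniteMeasure μ'] [IsFiniteMeasure ν']
    (hμ' : μ' ≤ μ) (hν' : ν' ≤ ν) (h : μ' univ = ν' univ) :
    TabLe a b p μ ν ≤ tabCost a b p μ ν μ' ν' :=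
  iInf₂_le_of_le μ' ν' <| iInf₂_le_of_le ‹_› ‹_› <| iInf₂_le_of_le hμ' hν' <| iInf_le _ h

variable {p}

theorem TabLe_le_of_isPlan (hp : 1 ≤ p) [IsFiniteMeasure μ] [IsFiniteMeasure ν]
    {μ' ν' : Measure (Rd d)} [IsFiniteMeasure μ'] [IsFiniteMeasure ν']
    (h : μ' univ = ν' univ) (hμ' : μ' univ ≠ 0) {π : Measure (Rd d × Rd d)}
    (hπ : IsPlan μ' ν' π) :
    TabLe a b p μ ν ≤ ENNReal.ofReal a ^ p * (tv μ μ' + tv ν ν') ^ p +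
      ENNReal.ofReal b ^ p * (μ' univ ^ p * planCost p π) := by
  have := hπ.1
  set σ := μ' univ • π
  have hσfst : σ.fst = μ' := hπ.fst_smul hμ'
  have hσsnd : σ.snd = ν' := by
    simp only [σ, h]
    exact hπ.snd_smul (h ▸ hμ')
  have hσ : σ univ = μ' univ := by simp [σ]
  have : IsFiniteMeasure σ := ⟨hσ ▸ measure_lt_top μ' univ⟩
  obtain ⟨σ', hσ', hfst, hsnd, htv⟩ := exists_le_tv_le μ ν σ
  have : IsFiniteMeasure σ' := isFiniteMeasure_of_le σ hσ'
  rw [hσfst, hσsnd] at htv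
  have hW : Wp p σ'.fst σ'.snd ^ p ≤ μ' univ ^ p * planCost p π := calc
    _ ≤ σ' univ ^ (p - 1) * ∫⁻ q, edist q.1 q.2 ^ p ∂σ' := Wp_rpow_le hp σ'
    _ ≤ σ univ ^ (p - 1) * ∫⁻ q, edist q.1 q.2 ^ p ∂σ := by
      gcongr ?_ * ?_
      · exact ENNReal.rpow_le_rpow (hσ' univ) (by linarith)
      · exact lintegral_mono' hσ' le_rfl
    _ = μ' univ ^ p * planCost p π := by
      rw [lintegral_smul_measure, hσ, smul_eq_mul, ← mul_assoc, ENNReal.rpow_sub_one_mul hp,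
        planCost]
  calc TabLe a b p μ ν ≤ tabCost a b p μ ν σ'.fst σ'.snd :=
        TabLe_le_tabCost_of_le a b p μ ν hfst hsnd (by rw [Measure.fst_univ, Measure.snd_univ])
    _ ≤ _ := by unfold tabCost; gcongr

theorem TabLe_le_tabCost (hp : 1 ≤ p) [IsFiniteMeasure μ] [IsFiniteMeasure ν]
    {μ' ν' : Measure (Rd d)} [IsFiniteMeasure μ'] [IsFiniteMeasure ν']
    (h : μ' univ = ν' univ) : TabLe a b p μ ν ≤ tabCost a b p μ ν μ' ν' := by
  have hp₀ : 0 < p := zero_lt_one.trans_le hp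
  by_cases hμ' : μ' univ = 0
  -- there is no plan between null measures, but then `(0, 0)` is itself admissible
  · obtain rfl : μ' = 0 := Measure.measure_univ_eq_zero.1 hμ'
    obtain rfl : ν' = 0 := Measure.measure_univ_eq_zero.1 (h ▸ hμ')
    exact TabLe_le_tabCost_of_le a b p μ ν (Measure.zero_le μ) (Measure.zero_le ν) rfl
  have : NeZero μ' := ⟨fun h0 ↦ hμ' (by rw [h0, Measure.coe_zero, Pi.zero_apply])⟩
  have : NeZero ν' := ⟨fun h0 ↦ hμ' (by rw [h, h0, Measure.coe_zero, Pi.zero_apply])⟩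
  have : Nonempty {π // IsPlan μ' ν' π} := ⟨⟨_, isPlan_prod μ' ν'⟩⟩
  have hne_top : ∀ x : ℝ≥0∞, x ≠ ⊤ → x ^ p ≠ ⊤ := fun x hx ↦
    ENNReal.rpow_ne_top_of_nonneg hp₀.le hx
  calc TabLe a b p μ ν
      ≤ ⨅ π : {π // IsPlan μ' ν' π}, ENNReal.ofReal a ^ p * (tv μ μ' + tv ν ν') ^ p +
          ENNReal.ofReal b ^ p * (μ' univ ^ p * planCost p π.1) :=
        le_iInf fun π ↦ TabLe_le_of_isPlan a b μ ν hp h hμ' π.2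
    _ = tabCost a b p μ ν μ' ν' := by
      rw [tabCost, Wp_rpow_eq hp₀, ENNReal.mul_iInf, ENNReal.mul_iInf, ENNReal.add_iInf]
      · exact fun h ↦ absurd h (hne_top _ ENNReal.ofReal_ne_top)
      · exact fun h ↦ absurd h (hne_top _ (measure_ne_top μ' univ))

theorem TabLe_le_Tab (hp : 1 ≤ p) [IsFiniteMeasure μ] [IsFiniteMeasure ν] :
    TabLe a b p μ ν ≤ Tab a b p μ ν :=
  le_iInf₂ fun _ _ ↦ le_iInf₂ fun _ _ ↦ le_iInf fun h ↦ TabLe_le_tabCost a b μ ν hp h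

end Tab

theorem Tab_eq_inf_le_general {d : ℕ} (a b p : ℝ) (hp : 1 ≤ p)
    (μ ν : Measure (Rd d)) (hμ : finMom p μ) (hν : finMom p ν) :
    Tab a b p μ ν =
      ⨅ (μ' : Measure (Rd d)) (ν' : Measure (Rd d)) (_ : IsFiniteMeasure μ')
        (_ : IsFiniteMeasure ν') (_ : μ' ≤ μ) (_ : ν' ≤ ν)
        (_ : μ' Set.univ = ν' Set.univ),
        ENNReal.ofReal a ^ p * (tv μ μ' + tv ν ν') ^ p +
          ENNReal.ofReal b ^ p * Wp p μ' ν' ^ p := by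
  have := hμ.1
  have := hν.1
  exact le_antisymm (Tab_le_TabLe a b p μ ν) (TabLe_le_Tab a b μ ν hp)

/-- the infimum defining `T_p^{a,b}` is unchanged when adding the
constraints `μ̃ ≤ μ` and `ν̃ ≤ ν`. -/
theorem Tab_eq_inf_le {d : ℕ} (a b p : ℝ) (ha : 0 < a) (hb : 0 < b) (hp : 1 ≤ p)
    (μ ν : Measure (Rd d)) (hμ : finMom p μ) (hν : finMom p ν) :
    Tab a b p μ ν =
      ⨅ (μ' : Measure (Rd d)) (ν' : Measure (Rd d)) (_ : IsFiniteMeasure μ')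
        (_ : IsFiniteMeasure ν') (_ : μ' ≤ μ) (_ : ν' ≤ ν)
        (_ : μ' Set.univ = ν' Set.univ),
        ENNReal.ofReal a ^ p * (tv μ μ' + tv ν ν') ^ p +
          ENNReal.ofReal b ^ p * Wp p μ' ν' ^ p :=
  Tab_eq_inf_le_general a b p hp μ ν hμ hν
end
end

section
/- Let v, w be time-dependent vector fields on ℝ^d, uniformly L-Lipschitz in space, with flows φ^t, ψ^t respectively. Then for measures μ, ν of equal finite mass with finite p-th moments: W_p(φ^t#μ, ψ^t#ν) ≤ e^{Lt} W_p(μ,ν) + ((e^{Lt}−1)/L) · |μ| · sup_{τ∈[0,t]} ‖v_τ − w_τ‖_{C^0}. -/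
/-!
Grönwall's inequality, applied to a trajectory of `v` and a trajectory of `w` (the latter being a
`D`-approximate trajectory of `v`), gives the pointwise bound
`|φ^t x - ψ^t y| ≤ e^{Lt} |x - y| + (e^{Lt} - 1) / L · D`.
Pushing any plan between `μ` and `ν` forward by `φ^t × ψ^t` yields a plan between
the images, and Minkowski's inequality in `L^p` of that plan turns the pointwise bound into the
bound on costs; the mass factor of `W_p` multiplies the additive constant by `|μ|`.
-/

open MeasureTheory Set
open scoped ENNReal NNReal

noncomputable section

/-- `φ` is the flow of the time-dependent vector field `v`. -/
def IsFlowOf {d : ℕ} (v : ℝ → Rd d → Rd d) (φ : ℝ → Rd d → Rd d) : Prop :=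
  (∀ x, φ 0 x = x) ∧ (∀ x t, HasDerivAt (fun s => φ s x) (v t (φ t x)) t) ∧
    ∀ t, Measurable (φ t)

open Real in
theorem dist_flows_le {d : ℕ} {L : ℝ≥0} (hL : L ≠ 0) {D : ℝ} {v w φ ψ : ℝ → Rd d → Rd d}
    (hv : ∀ τ, LipschitzWith L (v τ)) (hφ : IsFlowOf v φ) (hψ : IsFlowOf w ψ) {t : ℝ}
    (ht : 0 ≤ t) (hD : ∀ τ ∈ Icc (0 : ℝ) t, ∀ x, ‖v τ x - w τ x‖ ≤ D) (x y : Rd d) :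
    dist (φ t x) (ψ t y) ≤ exp (L * t) * dist x y + (exp (L * t) - 1) / L * D := by
  have hφx : ∀ s, HasDerivAt (φ · x) (v s (φ s x)) s := hφ.2.1 x
  have hψy : ∀ s, HasDerivAt (ψ · y) (w s (ψ s y)) s := hψ.2.1 y
  have h := dist_le_of_approx_trajectories_ODE (εf := 0) (εg := D) (δ := dist x y) hv
    (fun s _ => (hφx s).continuousAt.continuousWithinAt) (fun s _ => (hφx s).hasDerivWithinAt)
    (fun s _ => by simp) (fun s _ => (hψy s).continuousAt.continuousWithinAt)
    (fun s _ => (hψy s).hasDerivWithinAt)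
    (fun s hs => by rw [dist_comm, dist_eq_norm]; exact hD s (Ico_subset_Icc_self hs) _)
    (by simp [hφ.1, hψ.1]) t ⟨ht, le_rfl⟩
  rw [gronwallBound_of_K_ne_0 (NNReal.coe_ne_zero.2 hL)] at h
  simp only [sub_zero, zero_add] at h
  exact h.trans_eq (by ring)

theorem IsPlan.map_prodMap {d : ℕ} {μ ν : Measure (Rd d)} {π : Measure (Rd d × Rd d)}
    (hπ : IsPlan μ ν π) {f g : Rd d → Rd d} (hf : Measurable f) (hg : Measurable g) :
    IsPlan (μ.map f) (ν.map g) (π.map (Prod.map f g)) := by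
  obtain ⟨hprob, hfst, hsnd⟩ := hπ
  refine ⟨Measure.isProbabilityMeasure_map (hf.prodMap hg).aemeasurable, ?_, ?_⟩
  · rw [Measure.map_map measurable_fst (hf.prodMap hg), Prod.map_fst',
      ← Measure.map_map hf measurable_fst, hfst, Measure.map_smul,
      Measure.map_apply hf MeasurableSet.univ, preimage_univ]
  · rw [Measure.map_map measurable_snd (hf.prodMap hg), Prod.map_snd',
      ← Measure.map_map hg measurable_snd, hsnd, Measure.map_smul,
      Measure.map_apply hg MeasurableSet.univ, preimage_univ]

theorem lintegral_mul_add_const_rpow_le {α : Type*} [MeasurableSpace α] {π : Measure α}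
    [IsProbabilityMeasure π] {p : ℝ} (hp : 1 ≤ p) {h : α → ℝ≥0∞} (hh : Measurable h)
    (a c : ℝ≥0∞) :
    (∫⁻ q, (a * h q + c) ^ p ∂π) ^ (1 / p) ≤ a * (∫⁻ q, h q ^ p ∂π) ^ (1 / p) + c := by
  have hp₀ : 0 < p := by linarith
  have hmul : (∫⁻ q, (a * h q) ^ p ∂π) ^ (1 / p) = a * (∫⁻ q, h q ^ p ∂π) ^ (1 / p) := by
    simp_rw [ENNReal.mul_rpow_of_nonneg _ _ hp₀.le]
    rw [lintegral_const_mul _ (hh.pow_const p), ENNReal.mul_rpow_of_nonneg _ _ (by positivity),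
      ← ENNReal.rpow_mul, mul_one_div_cancel hp₀.ne', ENNReal.rpow_one]
  have hconst : (∫⁻ _, c ^ p ∂π) ^ (1 / p) = c := by
    rw [lintegral_const, measure_univ, mul_one, ← ENNReal.rpow_mul,
      mul_one_div_cancel hp₀.ne', ENNReal.rpow_one]
  calc (∫⁻ q, (a * h q + c) ^ p ∂π) ^ (1 / p)
      ≤ (∫⁻ q, (a * h q) ^ p ∂π) ^ (1 / p) + (∫⁻ _, c ^ p ∂π) ^ (1 / p) :=
        ENNReal.lintegral_Lp_add_le (hh.const_mul a).aemeasurable aemeasurable_const hp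
    _ = a * (∫⁻ q, h q ^ p ∂π) ^ (1 / p) + c := by rw [hmul, hconst]

theorem planCost_map_rpow_le {d : ℕ} {p : ℝ} (hp : 1 ≤ p) {π : Measure (Rd d × Rd d)}
    [IsProbabilityMeasure π] {f g : Rd d → Rd d} (hf : Measurable f) (hg : Measurable g)
    {a c : ℝ≥0∞} (hfg : ∀ x y, edist (f x) (g y) ≤ a * edist x y + c) :
    planCost p (π.map (Prod.map f g)) ^ (1 / p) ≤ a * planCost p π ^ (1 / p) + c := by
  have hedist : Measurable fun q : Rd d × Rd d => edist q.1 q.2 :=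
    measurable_fst.edist measurable_snd
  rw [planCost, lintegral_map (hedist.pow_const p) (hf.prodMap hg)]
  calc (∫⁻ q, edist (f q.1) (g q.2) ^ p ∂π) ^ (1 / p)
      ≤ (∫⁻ q, (a * edist q.1 q.2 + c) ^ p ∂π) ^ (1 / p) := by
        gcongr with q
        exact hfg q.1 q.2
    _ ≤ a * planCost p π ^ (1 / p) + c := lintegral_mul_add_const_rpow_le hp hedist a c

theorem ENNReal.iInf_rpow_of_pos {ι : Sort*} (f : ι → ℝ≥0∞) {r : ℝ} (hr : 0 < r) :
    (⨅ i, f i) ^ r = ⨅ i, f i ^ r :=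
  (ENNReal.orderIsoRpow r hr).map_iInf f

theorem Wp_map_le {d : ℕ} {p : ℝ} (hp : 1 ≤ p) {μ ν : Measure (Rd d)} {f g : Rd d → Rd d}
    (hf : Measurable f) (hg : Measurable g) {a c : ℝ≥0∞} (ha₀ : a ≠ 0) (ha : a ≠ ∞)
    (hfg : ∀ x y, edist (f x) (g y) ≤ a * edist x y + c) :
    Wp p (μ.map f) (ν.map g) ≤ a * Wp p μ ν + c * μ univ := by
  have hp' : 0 < 1 / p := one_div_pos.2 (by linarith)
  have hcost : (⨅ π : {π // IsPlan (μ.map f) (ν.map g) π}, planCost p π.1) ^ (1 / p) ≤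
      a * (⨅ π : {π // IsPlan μ ν π}, planCost p π.1) ^ (1 / p) + c := by
    rw [ENNReal.iInf_rpow_of_pos _ hp', ENNReal.iInf_rpow_of_pos _ hp',
      ENNReal.mul_iInf_of_ne ha₀ ha, ENNReal.iInf_add]
    refine le_iInf fun ⟨π, hπ⟩ => ?_
    have := hπ.1
    exact (iInf_le (fun π' : {π // IsPlan (μ.map f) (ν.map g) π} => planCost p π'.1 ^ (1 / p))
      ⟨_, hπ.map_prodMap hf hg⟩).trans (planCost_map_rpow_le hp hf hg hfg)
  rw [Wp, Wp, Measure.map_apply hf MeasurableSet.univ, preimage_univ]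
  calc μ univ * (⨅ π : {π // IsPlan (μ.map f) (ν.map g) π}, planCost p π.1) ^ (1 / p)
      ≤ μ univ * (a * (⨅ π : {π // IsPlan μ ν π}, planCost p π.1) ^ (1 / p) + c) := by
        gcongr
    _ = a * (μ univ * (⨅ π : {π // IsPlan μ ν π}, planCost p π.1) ^ (1 / p)) + c * μ univ := by
        ring

theorem Wp_two_flows_le_general {d : ℕ} (p : ℝ) (hp : 1 ≤ p) (L : ℝ≥0) (hL : 0 < (L : ℝ)) (D : ℝ)
    (v w φ' ψ' : ℝ → Rd d → Rd d)
    (hv : ∀ t, LipschitzWith L (v t))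
    (hφ : IsFlowOf v φ') (hψ : IsFlowOf w ψ')
    (μ ν : Measure (Rd d))
    (t : ℝ) (ht : 0 ≤ t)
    (hD : ∀ τ ∈ Set.Icc (0:ℝ) t, ∀ x, ‖v τ x - w τ x‖ ≤ D) :
    Wp p (μ.map (φ' t)) (ν.map (ψ' t)) ≤
      ENNReal.ofReal (Real.exp (L * t)) * Wp p μ ν +
        ENNReal.ofReal ((Real.exp (L * t) - 1) / L * D) * μ Set.univ := by
  refine Wp_map_le hp (hφ.2.2 t) (hψ.2.2 t) (ENNReal.ofReal_pos.2 (Real.exp_pos _)).ne'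
    ENNReal.ofReal_ne_top fun x y => ?_
  calc edist (φ' t x) (ψ' t y) = ENNReal.ofReal (dist (φ' t x) (ψ' t y)) := edist_dist _ _
    _ ≤ ENNReal.ofReal (Real.exp (L * t) * dist x y + (Real.exp (L * t) - 1) / L * D) :=
        ENNReal.ofReal_le_ofReal (dist_flows_le (by exact_mod_cast hL.ne') hv hφ hψ ht hD x y)
    _ ≤ _ := ENNReal.ofReal_add_le
    _ = _ := by rw [ENNReal.ofReal_mul (Real.exp_nonneg _), ← edist_dist]

/-- comparison of the push-forwards of two measures under the flows of
two different vector fields. -/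
theorem Wp_two_flows_le {d : ℕ} (p : ℝ) (hp : 1 ≤ p) (L : ℝ≥0) (hL : 0 < (L : ℝ)) (D : ℝ)
    (v w φ' ψ' : ℝ → Rd d → Rd d)
    (hv : ∀ t, LipschitzWith L (v t)) (hw : ∀ t, LipschitzWith L (w t))
    (hφ : IsFlowOf v φ') (hψ : IsFlowOf w ψ')
    (μ ν : Measure (Rd d)) (hμ : finMom p μ) (hν : finMom p ν)
    (hmass : μ Set.univ = ν Set.univ) (t : ℝ) (ht : 0 ≤ t)
    (hD : ∀ τ ∈ Set.Icc (0:ℝ) t, ∀ x, ‖v τ x - w τ x‖ ≤ D) :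
    Wp p (μ.map (φ' t)) (ν.map (ψ' t)) ≤
      ENNReal.ofReal (Real.exp (L * t)) * Wp p μ ν +
        ENNReal.ofReal ((Real.exp (L * t) - 1) / L * D) * μ Set.univ :=
  Wp_two_flows_le_general p hp L hL D v w φ' ψ' hv hφ hψ μ ν t ht hD
end
end

section
/- Let v be a time-dependent vector field on ℝ^d, Lipschitz in space and uniformly bounded, with flow φ^t. Then for any positive finite Borel measure μ with finite p-th moment, W_p^{a,b}(μ, φ^t#μ) ≤ b·t·‖v‖_{C^0}·|μ|. -/
open MeasureTheory Set
open scoped ENNReal NNReal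

noncomputable section

/-! Since `μ` and `φ^t#μ` have the same mass, `T_p^{a,b}` may be tested with `μ' = μ`,
`ν' = φ^t#μ`, which kills the total-variation terms. The plan `x ↦ (x, φ^t x)` then bounds
`W_p`, because a trajectory of speed at most `‖v‖_{C⁰}` moves by at most `t ‖v‖_{C⁰}`. -/

theorem MeasureTheory.Measure.map_apply_univ {α β : Type*} [MeasurableSpace α]
    [MeasurableSpace β] {μ : Measure α} {f : α → β} (hf : AEMeasurable f μ) :
    μ.map f univ = μ univ := by
  rw [Measure.map_apply_of_aemeasurable hf MeasurableSet.univ, preimage_univ]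

theorem IsFlowOf.norm_sub_le {d : ℕ} {v φ : ℝ → Rd d → Rd d} (hφ : IsFlowOf v φ) {M : ℝ}
    (hM : ∀ s x, ‖v s x‖ ≤ M) (x : Rd d) (t : ℝ) : ‖φ t x - x‖ ≤ M * |t| := by
  have h := convex_univ.norm_image_sub_le_of_norm_hasDerivWithin_le
    (fun s _ => (hφ.2.1 x s).hasDerivWithinAt) (fun s _ => hM s _) (mem_univ 0) (mem_univ t)
  simpa [hφ.1 x, Real.norm_eq_abs] using h

theorem IsFlowOf.edist_le {d : ℕ} {v φ : ℝ → Rd d → Rd d} (hφ : IsFlowOf v φ) {M : ℝ}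
    (hM : ∀ s x, ‖v s x‖ ≤ M) (x : Rd d) (t : ℝ) :
    edist x (φ t x) ≤ ENNReal.ofReal (M * |t|) := by
  rw [edist_dist, dist_comm, dist_eq_norm]
  exact ENNReal.ofReal_le_ofReal (hφ.norm_sub_le hM x t)

section GraphPlan

variable {d : ℕ} {μ : Measure (Rd d)} {f : Rd d → Rd d}

def graphPlan (μ : Measure (Rd d)) (f : Rd d → Rd d) : Measure (Rd d × Rd d) :=
  ((μ univ)⁻¹ • μ).map fun x => (x, f x)

theorem isPlan_graphPlan [IsFiniteMeasure μ] (hμ : μ univ ≠ 0) (hf : Measurable f) :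
    IsPlan μ (μ.map f) (graphPlan μ f) := by
  have hgraph : Measurable fun x => (x, f x) := measurable_id'.prodMk hf
  refine ⟨⟨?_⟩, ?_, ?_⟩
  · simp [graphPlan, Measure.map_apply hgraph MeasurableSet.univ,
      ENNReal.inv_mul_cancel hμ (measure_ne_top μ univ)]
  · rw [graphPlan, Measure.map_map measurable_fst hgraph]
    exact Measure.map_id
  · rw [graphPlan, Measure.map_map measurable_snd hgraph, Measure.map_apply_univ hf.aemeasurable,
    Measure.map_smul]
    rfl

theorem planCost_graphPlan_le [IsFiniteMeasure μ] (hμ : μ univ ≠ 0) (hf : Measurable f)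
    {p : ℝ} (hp : 0 ≤ p) {C : ℝ≥0∞} (hC : ∀ x, edist x (f x) ≤ C) :
    planCost p (graphPlan μ f) ≤ C ^ p := by
  rw [planCost, graphPlan, lintegral_map
    ((measurable_fst.edist measurable_snd).pow_const p) (measurable_id'.prodMk hf)]
  calc ∫⁻ x, edist x (f x) ^ p ∂(μ univ)⁻¹ • μ
      ≤ ∫⁻ _, C ^ p ∂(μ univ)⁻¹ • μ := lintegral_mono fun x => ENNReal.rpow_le_rpow (hC x) hp
    _ = C ^ p := by
      simp [lintegral_const, ENNReal.inv_mul_cancel hμ (measure_ne_top μ univ)]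

theorem Wp_map_le_s12 [IsFiniteMeasure μ] (hf : Measurable f) {p : ℝ} (hp : 0 < p) {C : ℝ≥0∞}
    (hC : ∀ x, edist x (f x) ≤ C) : Wp p μ (μ.map f) ≤ μ univ * C := by
  rcases eq_or_ne (μ univ) 0 with hμ | hμ
  · simp [Wp, hμ]
  have hinf : (⨅ π : {π // IsPlan μ (μ.map f) π}, planCost p π.1) ≤ C ^ p :=
    (iInf_le _ ⟨_, isPlan_graphPlan hμ hf⟩).trans (planCost_graphPlan_le hμ hf hp.le hC)
  calc Wp p μ (μ.map f) ≤ μ univ * (C ^ p) ^ (1 / p) := by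
        unfold Wp; gcongr
    _ = μ univ * C := by rw [← ENNReal.rpow_mul, mul_one_div_cancel hp.ne', ENNReal.rpow_one]

end GraphPlan

theorem tv_self {d : ℕ} (μ : Measure (Rd d)) : tv μ μ = 0 := by
  simp [tv]

theorem Wab_le_Wp {d : ℕ} (a b : ℝ) {p : ℝ} (hp : 0 < p) {μ ν : Measure (Rd d)}
    [IsFiniteMeasure μ] [IsFiniteMeasure ν] (hμν : μ univ = ν univ) :
    Wab a b p μ ν ≤ ENNReal.ofReal b * Wp p μ ν := by
  have hTab : Tab a b p μ ν ≤ ENNReal.ofReal b ^ p * Wp p μ ν ^ p := by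
    refine iInf_le_of_le μ <| iInf_le_of_le ν <| iInf_le_of_le ‹_› <| iInf_le_of_le ‹_› <|
      iInf_le_of_le hμν ?_
    simp [tv_self, ENNReal.zero_rpow_of_pos hp]
  calc Wab a b p μ ν ≤ (ENNReal.ofReal b ^ p * Wp p μ ν ^ p) ^ (1 / p) := by
        unfold Wab; gcongr
    _ = ENNReal.ofReal b * Wp p μ ν := by
      rw [← ENNReal.mul_rpow_of_nonneg _ _ hp.le, ← ENNReal.rpow_mul,
        mul_one_div_cancel hp.ne', ENNReal.rpow_one]

theorem Wab_self_flow_le_general {d : ℕ} (a b p : ℝ) (hp : 1 ≤ p)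
    (M : ℝ) (v φ' : ℝ → Rd d → Rd d)
    (hM : ∀ s x, ‖v s x‖ ≤ M)
    (hφ : IsFlowOf v φ')
    (μ : Measure (Rd d)) (hμ : finMom p μ) (t : ℝ) (ht : 0 ≤ t) :
    Wab a b p μ (μ.map (φ' t)) ≤ ENNReal.ofReal (b * t * M) * μ Set.univ := by
  have hp0 : 0 < p := zero_lt_one.trans_le hp
  have hMt : 0 ≤ M * t := mul_nonneg ((norm_nonneg _).trans (hM 0 0)) ht
  have : IsFiniteMeasure μ := hμ.1
  have hWp : Wp p μ (μ.map (φ' t)) ≤ μ univ * ENNReal.ofReal (M * t) :=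
    Wp_map_le_s12 (hφ.2.2 t) hp0 fun x => by simpa [abs_of_nonneg ht] using hφ.edist_le hM x t
  calc Wab a b p μ (μ.map (φ' t)) ≤ ENNReal.ofReal b * Wp p μ (μ.map (φ' t)) :=
        Wab_le_Wp a b hp0 (Measure.map_apply_univ (hφ.2.2 t).aemeasurable).symm
    _ ≤ ENNReal.ofReal b * (μ univ * ENNReal.ofReal (M * t)) := by gcongr
    _ = ENNReal.ofReal (b * t * M) * μ univ := by
      rw [mul_assoc b, mul_comm t, ENNReal.ofReal_mul' hMt]
      ring

/-- `W_p^{a,b}(μ, φ^t#μ) ≤ b t ‖v‖_{C⁰} |μ|`. -/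
theorem Wab_self_flow_le {d : ℕ} (a b p : ℝ) (ha : 0 < a) (hb : 0 < b) (hp : 1 ≤ p)
    (L : ℝ≥0) (M : ℝ) (v φ' : ℝ → Rd d → Rd d)
    (hv : ∀ t, LipschitzWith L (v t)) (hM : ∀ s x, ‖v s x‖ ≤ M)
    (hφ : IsFlowOf v φ')
    (μ : Measure (Rd d)) (hμ : finMom p μ) (t : ℝ) (ht : 0 ≤ t) :
    Wab a b p μ (μ.map (φ' t)) ≤ ENNReal.ofReal (b * t * M) * μ Set.univ :=
  Wab_self_flow_le_general a b p hp M v φ' hM hφ μ hμ t ht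
end
end
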